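/- arXiv:2601.04193 — 3 statements merged into one kernel-verified Lean document; each statement's English description precedes it below -/
import Mathlib

section
/- Let G be a rooted tree and let f : [0,1] → (V → ℝ) be a continuously differentiable path of probability distributions on V, with tails F(t)_x = Σ_{y∈U(x)} f(t)_y. Then for every t ∈ (0,1) the metric speed of f with respect to W1 exists and equals lim_{h→0} W1(f(t+h), f(t))/|h| = Σ_{x∈V} |∂_t F(t)_x|. -/
open scoped BigOperators
open Set

/-- A probability distribution on a finite set. -/
def IsProbDist {S : Type*} [Fintype S] (f : S → ℝ) : Prop :=
  (∀ s, 0 ≤ f s) ∧ ∑ s, f s = 1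

/-- A coupling of two distributions on a finite set. -/
def IsCoupling {V : Type*} [Fintype V] (f0 f1 : V → ℝ) (π : V → V → ℝ) : Prop :=
  (∀ x y, 0 ≤ π x y) ∧ (∀ x, ∑ y, π x y = f0 x) ∧ (∀ y, ∑ x, π x y = f1 y)

/-- Wasserstein-1 distance w.r.t. the shortest-path distance of a graph. -/
noncomputable def W1 {V : Type*} [Fintype V] (T : SimpleGraph V) (f0 f1 : V → ℝ) : ℝ :=
  sInf {c : ℝ | ∃ π : V → V → ℝ, IsCoupling f0 f1 π ∧
    c = ∑ x, ∑ y, (T.dist x y : ℝ) * π x y}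

/-- The tail of `f` past `x` in a tree rooted at `r`: the sum of `f y` over the
vertices `y` such that the unique path from `r` to `y` passes through `x`
(equivalently, `dist r x + dist x y = dist r y`). -/
noncomputable def tailSum {V : Type*} [Fintype V] (T : SimpleGraph V) (r : V)
    (f : V → ℝ) (x : V) : ℝ :=
  ∑ y, if T.dist r x + T.dist x y = T.dist r y then f y else 0

/-- The energy functional `I_q`. -/
noncomputable def Iq {E : Type*} [Fintype E] (q : ℝ) (v g : ℝ → E → ℝ) : ℝ :=
  (∫ t in (0:ℝ)..1, ∑ k, g t k * |v t k| ^ q) ^ (1 / q)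

/-- A finite directed graph on vertex type `V` with edge type `E`. -/
structure DiGraph (V E : Type*) where
  tail : E → V
  head : E → V
  ne : ∀ k, tail k ≠ head k

namespace DiGraph

variable {V E : Type*}

/-- The signed incidence matrix. -/
def incidence [DecidableEq V] (G : DiGraph V E) (x : V) (k : E) : ℝ :=
  if G.head k = x then 1 else if G.tail k = x then -1 else 0

/-- The underlying undirected simple graph. -/
def toSimpleGraph (G : DiGraph V E) : SimpleGraph V where
  Adj x y := x ≠ y ∧ ∃ k, (G.tail k = x ∧ G.head k = y) ∨ (G.tail k = y ∧ G.head k = x)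
  symm := ⟨by rintro x y ⟨hne, k, h⟩; exact ⟨hne.symm, k, h.symm⟩⟩
  loopless := ⟨by rintro x ⟨hne, -⟩; exact hne rfl⟩

/-- `G` is a rooted tree with root `r`: the underlying graph is a tree, and every
edge is oriented away from the root. -/
def IsRootedTree (G : DiGraph V E) (r : V) : Prop :=
  G.toSimpleGraph.IsTree ∧
  ∀ k, G.toSimpleGraph.dist r (G.head k) = G.toSimpleGraph.dist r (G.tail k) + 1

end DiGraph

/-- A solution `(f, v, g)` of the discrete transport equation on `[0,1]`. -/
structure TransportSolution {V E : Type*} [Fintype V] [Fintype E] [DecidableEq V]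
    (G : DiGraph V E) where
  f : ℝ → V → ℝ
  v : ℝ → E → ℝ
  g : ℝ → E → ℝ
  f_prob : ∀ t ∈ Icc (0:ℝ) 1, IsProbDist (f t)
  g_prob : ∀ t ∈ Icc (0:ℝ) 1, IsProbDist (g t)
  v_cont : ContinuousOn (fun t => v t) (Icc (0:ℝ) 1)
  g_cont : ContinuousOn (fun t => g t) (Icc (0:ℝ) 1)
  transport : ∀ x : V, ∀ t ∈ Icc (0:ℝ) 1,
    HasDerivWithinAt (fun s => f s x) (∑ k, G.incidence x k * v t k * g t k) (Icc (0:ℝ) 1) t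

/-!
On a tree, `W1` between two distributions of equal mass equals `∑ x, |F₀ x - F₁ x|`, the `ℓ¹`
distance of their tails. Any coupling costs at least this much, because the indicators of the root
paths to `a` and to `b` differ exactly on the path between `a` and `b`, so at no more than
`dist a b` vertices. Conversely, moving the excess at a deepest vertex of disagreement to its
parent changes a single tail and lowers the tail distance by exactly the mass moved, while a
coupling of the modified pair becomes a coupling of the original pair at an extra cost of at most
that mass; induction on the disagreement yields a coupling whose cost is the tail distance. With
this formula the difference quotient of `W1` is `∑ x, |(F x (t + h) - F x t) / h|`, and the tails
are linear in `f`.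
-/

open Finset Filter Topology SimpleGraph

section RootPath

variable {V : Type*} {T : SimpleGraph V} {r x : V}

abbrev OnRootPath (T : SimpleGraph V) (r x y : V) : Prop :=
  T.dist r x + T.dist x y = T.dist r y

lemma onRootPath_iff_mem_support (hT : T.IsTree) {y : V} {q : T.Walk r y} (hq : q.IsPath)
    (hlen : q.length = T.dist r y) : OnRootPath T r x y ↔ x ∈ q.support := by
  constructor
  · intro hx
    obtain ⟨p₁, hp₁⟩ := hT.connected.exists_walk_length_eq_dist r x
    obtain ⟨p₂, hp₂⟩ := hT.connected.exists_walk_length_eq_dist x y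
    have hlen' : (p₁.append p₂).length = T.dist r y := by
      rw [Walk.length_append, hp₁, hp₂, hx]
    have hpq : p₁.append p₂ = q := congrArg Subtype.val <|
      (hT.isAcyclic.subsingleton_path r y).elim
        ⟨_, (p₁.append p₂).isPath_of_length_eq_dist hlen'⟩ ⟨q, hq⟩
    exact hpq ▸ Walk.support_subset_support_append_left _ _ p₁.end_mem_support
  · classical
    intro hx
    have hsplit := congrArg Walk.length (q.take_spec hx)
    rw [Walk.length_append, hlen] at hsplit
    have h₁ := dist_le (q.takeUntil x hx)
    have h₂ := dist_le (q.dropUntil x hx)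
    have h₃ : T.dist r y ≤ T.dist r x + T.dist x y := hT.connected.dist_triangle
    omega

lemma onRootPath_of_adj_iff (hT : T.IsTree) {p b : V} (hadj : T.Adj p b)
    (hd : T.dist r b = T.dist r p + 1) :
    OnRootPath T r x b ↔ OnRootPath T r x p ∨ x = b := by
  obtain ⟨q, hq, hqlen⟩ := hT.connected.exists_path_of_dist r p
  have hlen : (q.concat hadj).length = T.dist r b := by
    rw [Walk.length_concat, hqlen, hd]
  rw [onRootPath_iff_mem_support hT ((q.concat hadj).isPath_of_length_eq_dist hlen) hlen,
    onRootPath_iff_mem_support hT hq hqlen, Walk.support_concat,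
    List.mem_append, List.mem_singleton]

lemma exists_adj_dist_eq_add_one (hconn : T.Connected) (hx : x ≠ r) :
    ∃ p, T.Adj p x ∧ T.dist r x = T.dist r p + 1 := by
  obtain ⟨w, hw⟩ := hconn.exists_walk_length_eq_dist x r
  cases w with
  | nil => exact absurd rfl hx
  | @cons _ p _ hadj w =>
    refine ⟨p, hadj.symm, ?_⟩
    have h₁ := dist_le w
    have h₂ : T.dist x r ≤ T.dist x p + T.dist p r := hconn.dist_triangle
    rw [dist_eq_one_iff_adj.2 hadj, ← hw, Walk.length_cons] at h₂
    rw [dist_comm, ← hw, Walk.length_cons, dist_comm]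
    omega

noncomputable def rootPathIndicator (T : SimpleGraph V) (r y x : V) : ℝ :=
  if OnRootPath T r x y then 1 else 0

lemma rootPathIndicator_of_adj [DecidableEq V] (hT : T.IsTree) {p b : V} (hadj : T.Adj p b)
    (hd : T.dist r b = T.dist r p + 1) (x : V) :
    rootPathIndicator T r b x = rootPathIndicator T r p x + if x = b then 1 else 0 := by
  have hb : ¬ OnRootPath T r b p := by
    unfold OnRootPath
    rw [dist_eq_one_iff_adj.2 hadj.symm]
    omega
  by_cases hxb : x = b
  · subst hxb
    simp [rootPathIndicator, hb]
  · simp [rootPathIndicator, onRootPath_of_adj_iff hT hadj hd, hxb]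

end RootPath

section TailSum

variable {V : Type*} [Fintype V] {T : SimpleGraph V} {r : V}

lemma tailSum_eq_sum_mul_indicator (f : V → ℝ) (x : V) :
    tailSum T r f x = ∑ y, f y * rootPathIndicator T r y x := by
  simp only [tailSum, rootPathIndicator, mul_ite, mul_one, mul_zero]

lemma tailSum_add (f g : V → ℝ) (x : V) :
    tailSum T r (f + g) x = tailSum T r f x + tailSum T r g x := by
  simp only [tailSum_eq_sum_mul_indicator, Pi.add_apply, add_mul, sum_add_distrib]

lemma tailSum_sub (f g : V → ℝ) (x : V) :
    tailSum T r (f - g) x = tailSum T r f x - tailSum T r g x := by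
  simp only [tailSum_eq_sum_mul_indicator, Pi.sub_apply, sub_mul, sum_sub_distrib]

lemma tailSum_single [DecidableEq V] (y : V) (m : ℝ) (x : V) :
    tailSum T r (Pi.single y m) x = m * rootPathIndicator T r y x := by
  rw [tailSum_eq_sum_mul_indicator, Fintype.sum_eq_single y fun z hz => by simp [hz],
    Pi.single_eq_same]

lemma hasDerivAt_tailSum {f : ℝ → V → ℝ} {f' : V → ℝ} {t : ℝ}
    (hf : ∀ y, HasDerivAt (fun s => f s y) (f' y) t) (x : V) :
    HasDerivAt (fun s => tailSum T r (f s) x) (tailSum T r f' x) t := by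
  simp only [tailSum_eq_sum_mul_indicator]
  exact HasDerivAt.fun_sum fun y _ => (hf y).mul_const _

lemma sum_abs_rootPathIndicator_sub_of_adj [DecidableEq V] (hT : T.IsTree) {a b : V}
    (hadj : T.Adj a b) :
    ∑ x, |rootPathIndicator T r a x - rootPathIndicator T r b x| = 1 := by
  rcases hT.dist_eq_dist_add_one_of_adj r hadj with hd | hd
  · simp only [rootPathIndicator_of_adj hT hadj.symm hd, add_sub_cancel_left]
    simp [apply_ite abs]
  · simp only [rootPathIndicator_of_adj hT hadj hd, sub_add_cancel_left, abs_neg]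
    simp [apply_ite abs]

lemma sum_abs_rootPathIndicator_sub_le_dist (hT : T.IsTree) (a b : V) :
    ∑ x, |rootPathIndicator T r a x - rootPathIndicator T r b x| ≤ T.dist a b := by
  classical
  obtain ⟨w, hw⟩ := hT.connected.exists_walk_length_eq_dist a b
  rw [← hw]
  clear hw
  induction w with
  | nil => simp
  | @cons a c b hadj w ih =>
    calc ∑ x, |rootPathIndicator T r a x - rootPathIndicator T r b x|
        ≤ ∑ x, (|rootPathIndicator T r a x - rootPathIndicator T r c x|
            + |rootPathIndicator T r c x - rootPathIndicator T r b x|) :=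
          sum_le_sum fun x _ => abs_sub_le _ _ _
      _ ≤ 1 + w.length := by
          rw [sum_add_distrib, sum_abs_rootPathIndicator_sub_of_adj hT hadj]
          exact add_le_add_right ih 1
      _ = (w.cons hadj).length := by
          rw [Walk.length_cons]
          push_cast
          ring

end TailSum

section Coupling

variable {V : Type*} [Fintype V] {T : SimpleGraph V} {f₀ f₁ : V → ℝ} {π : V → V → ℝ}

noncomputable def couplingCost (T : SimpleGraph V) (π : V → V → ℝ) : ℝ :=
  ∑ x, ∑ y, (T.dist x y : ℝ) * π x y

lemma IsCoupling.transpose (hπ : IsCoupling f₀ f₁ π) : IsCoupling f₁ f₀ (fun x y => π y x) :=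
  ⟨fun x y => hπ.1 y x, hπ.2.2, hπ.2.1⟩

lemma couplingCost_transpose : couplingCost T (fun x y => π y x) = couplingCost T π := by
  unfold couplingCost
  rw [sum_comm]
  simp_rw [dist_comm]

lemma isCoupling_diagonal [DecidableEq V] (hf : 0 ≤ f₀) : IsCoupling f₀ f₀ (Matrix.diagonal f₀) :=
  ⟨fun x y => by rw [Matrix.diagonal_apply]; split_ifs; exacts [hf x, le_rfl],
    fun x => by simp [Matrix.diagonal_apply], fun y => by simp [Matrix.diagonal_apply]⟩

lemma couplingCost_diagonal [DecidableEq V] (f : V → ℝ) :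
    couplingCost T (Matrix.diagonal f) = 0 := by
  simp [couplingCost, Matrix.diagonal_apply]

lemma IsCoupling.exists_transfer [DecidableEq V] (hconn : T.Connected) (hπ : IsCoupling f₀ f₁ π)
    (a p : V) {m : ℝ} (hm : 0 ≤ m) (hmp : m ≤ f₀ p) :
    ∃ σ, IsCoupling (f₀ + Pi.single a m - Pi.single p m) f₁ σ ∧
      couplingCost T σ ≤ couplingCost T π + m * T.dist a p := by
  -- move the fraction `m / f₀ p` of row `p` of `π` to row `a`
  set ρ : V → ℝ := fun y => m / f₀ p * π p y
  have hρ_nonneg : ∀ y, 0 ≤ ρ y := fun y => mul_nonneg (div_nonneg hm (hm.trans hmp)) (hπ.1 p y)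
  have hρ_le : ∀ y, ρ y ≤ π p y := fun y =>
    mul_le_of_le_one_left (hπ.1 p y) (div_le_one_of_le₀ hmp (hm.trans hmp))
  have hρ_sum : ∑ y, ρ y = m := by
    rw [← mul_sum, hπ.2.1 p]
    exact div_mul_cancel_of_imp fun h => le_antisymm (h ▸ hmp) hm
  refine ⟨fun x y => π x y + (if x = a then ρ y else 0) - (if x = p then ρ y else 0),
    ⟨fun x y => ?_, fun x => ?_, fun y => ?_⟩, ?_⟩
  · have := hπ.1 x y
    have := hρ_nonneg y
    rcases eq_or_ne x p with rfl | hxp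
    · have := hρ_le y
      dsimp only
      split_ifs <;> linarith
    · dsimp only
      split_ifs <;> linarith
  · simp only [sum_add_distrib, sum_sub_distrib, hπ.2.1 x, Pi.add_apply, Pi.sub_apply,
      Pi.single_apply]
    split_ifs <;> simp [hρ_sum]
  · simp [sum_add_distrib, sum_sub_distrib, hπ.2.2 y]
  · have hstep : ∀ y, (T.dist a y : ℝ) * ρ y ≤ T.dist p y * ρ y + T.dist a p * ρ y := fun y => by
      rw [← add_mul, add_comm]
      exact mul_le_mul_of_nonneg_right (by exact_mod_cast hconn.dist_triangle) (hρ_nonneg y)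
    have := sum_le_sum fun y (_ : y ∈ Finset.univ) => hstep y
    rw [sum_add_distrib, ← mul_sum, hρ_sum] at this
    simp only [couplingCost, mul_add, mul_sub, mul_ite, mul_zero, sum_add_distrib, sum_sub_distrib]
    simp only [sum_comm (γ := V) (f := fun x y => if x = _ then _ else _), sum_ite_eq',
      Finset.mem_univ, if_true]
    linarith

end Coupling

section TailDist

variable {V : Type*} [Fintype V] {T : SimpleGraph V} {r : V} {f₀ f₁ : V → ℝ}

noncomputable def tailDist (T : SimpleGraph V) (r : V) (f₀ f₁ : V → ℝ) : ℝ :=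
  ∑ x, |tailSum T r f₀ x - tailSum T r f₁ x|

lemma tailDist_nonneg : 0 ≤ tailDist T r f₀ f₁ :=
  sum_nonneg fun _ _ => abs_nonneg _

lemma tailDist_comm : tailDist T r f₀ f₁ = tailDist T r f₁ f₀ :=
  sum_congr rfl fun _ _ => abs_sub_comm _ _

lemma tailDist_le_couplingCost (hT : T.IsTree) {π : V → V → ℝ} (hπ : IsCoupling f₀ f₁ π) :
    tailDist T r f₀ f₁ ≤ couplingCost T π := by
  have hdiff : ∀ x, tailSum T r f₀ x - tailSum T r f₁ x =
      ∑ a, ∑ b, π a b * (rootPathIndicator T r a x - rootPathIndicator T r b x) := fun x => by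
    simp only [mul_sub, sum_sub_distrib, ← sum_mul, hπ.2.1, tailSum_eq_sum_mul_indicator]
    rw [sum_comm (f := fun a b => π a b * _)]
    simp only [← sum_mul, hπ.2.2]
  calc tailDist T r f₀ f₁
      ≤ ∑ x, ∑ a, ∑ b, π a b * |rootPathIndicator T r a x - rootPathIndicator T r b x| := by
        refine sum_le_sum fun x _ => ?_
        rw [hdiff]
        refine (abs_sum_le_sum_abs _ _).trans (sum_le_sum fun a _ => ?_)
        refine (abs_sum_le_sum_abs _ _).trans (sum_le_sum fun b _ => ?_)
        rw [abs_mul, abs_of_nonneg (hπ.1 a b)]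
    _ = ∑ a, ∑ b, π a b * ∑ x, |rootPathIndicator T r a x - rootPathIndicator T r b x| := by
        simp only [mul_sum]
        rw [sum_comm]
        exact sum_congr rfl fun a _ => sum_comm
    _ ≤ couplingCost T π := by
        refine sum_le_sum fun a _ => sum_le_sum fun b _ => ?_
        rw [mul_comm]
        exact mul_le_mul_of_nonneg_right (sum_abs_rootPathIndicator_sub_le_dist hT a b) (hπ.1 a b)

noncomputable def disagreementWeight (T : SimpleGraph V) (r : V) (f₀ f₁ : V → ℝ) : ℕ :=
  ∑ x, if f₀ x = f₁ x then 0 else T.dist r x + 1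

lemma disagreementWeight_comm : disagreementWeight T r f₀ f₁ = disagreementWeight T r f₁ f₀ :=
  sum_congr rfl fun x _ => by simp only [eq_comm]

lemma disagreementWeight_lt [DecidableEq V] {g : V → ℝ} {x₀ p : V}
    (hp : T.dist r p < T.dist r x₀) (hx₀ : f₀ x₀ ≠ f₁ x₀) (hg : g x₀ = f₁ x₀)
    (hgf : ∀ x, x ≠ x₀ → x ≠ p → g x = f₀ x) :
    disagreementWeight T r g f₁ < disagreementWeight T r f₀ f₁ := by
  have hle : ∀ x, ((if g x = f₁ x then 0 else T.dist r x + 1) +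
      if x = x₀ then T.dist r x₀ + 1 else 0) ≤
      (if f₀ x = f₁ x then 0 else T.dist r x + 1) + if x = p then T.dist r p + 1 else 0 := by
    intro x
    rcases eq_or_ne x x₀ with rfl | hx
    · simp [hg, hx₀]
    rcases eq_or_ne x p with rfl | hxp
    · rw [if_neg hx, if_pos rfl]
      split_ifs <;> omega
    · simp [hgf x hx hxp, hx, hxp]
  have := sum_le_sum fun x (_ : x ∈ Finset.univ) => hle x
  simp only [sum_add_distrib, sum_ite_eq', Finset.mem_univ, if_true] at this
  unfold disagreementWeight
  omega

lemma tailSum_sub_tailSum_of_forall_le (hconn : T.Connected) {x₀ : V}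
    (hmax : ∀ y, f₀ y ≠ f₁ y → T.dist r y ≤ T.dist r x₀) :
    tailSum T r f₀ x₀ - tailSum T r f₁ x₀ = f₀ x₀ - f₁ x₀ := by
  rw [← tailSum_sub, tailSum, Fintype.sum_eq_single x₀]
  · simp
  intro y hy
  split_ifs with hpath
  · have hpos := hconn.pos_dist_of_ne (Ne.symm hy)
    have : f₀ y = f₁ y := by
      by_contra hne
      have := hmax y hne
      omega
    simp [this]
  · rfl

lemma exists_deepest_disagreement (hne : f₀ ≠ f₁) :
    ∃ x₀, f₀ x₀ ≠ f₁ x₀ ∧ ∀ y, f₀ y ≠ f₁ y → T.dist r y ≤ T.dist r x₀ := by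
  classical
  obtain ⟨x₀, hx₀, hmax⟩ := exists_max_image (univ.filter fun x => f₀ x ≠ f₁ x) (T.dist r)
    (filter_nonempty_iff.2 (by simpa [funext_iff] using hne))
  exact ⟨x₀, (mem_filter.1 hx₀).2, fun y hy => hmax y (by simpa using hy)⟩

lemma ne_root_of_deepest_disagreement (hconn : T.Connected) (hsum : ∑ x, f₀ x = ∑ x, f₁ x)
    {x₀ : V} (hx₀ : f₀ x₀ ≠ f₁ x₀) (hmax : ∀ y, f₀ y ≠ f₁ y → T.dist r y ≤ T.dist r x₀) :
    x₀ ≠ r := by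
  classical
  rintro rfl
  have hagree : ∀ y ∈ univ.erase x₀, f₀ y = f₁ y := fun y hy => by
    by_contra hne
    have := hmax y hne
    exact ne_of_mem_erase hy (hconn.dist_eq_zero_iff.1 (by simpa using this)).symm
  rw [← add_sum_erase _ _ (mem_univ x₀), ← add_sum_erase _ _ (mem_univ x₀),
    sum_congr rfl hagree] at hsum
  exact hx₀ (add_right_cancel hsum)

lemma tailDist_eq_add_tailDist_transfer [DecidableEq V] (hT : T.IsTree) {p b : V}
    (hadj : T.Adj p b) (hd : T.dist r b = T.dist r p + 1)
    (hmax : ∀ y, f₀ y ≠ f₁ y → T.dist r y ≤ T.dist r b) :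
    tailDist T r f₀ f₁ = |f₀ b - f₁ b| +
      tailDist T r (f₀ + Pi.single p (f₀ b - f₁ b) - Pi.single b (f₀ b - f₁ b)) f₁ := by
  have hb := tailSum_sub_tailSum_of_forall_le hT.connected hmax
  have htail : ∀ x, |tailSum T r f₀ x - tailSum T r f₁ x| = (if x = b then |f₀ b - f₁ b| else 0) +
      |tailSum T r (f₀ + Pi.single p (f₀ b - f₁ b) - Pi.single b (f₀ b - f₁ b)) x
        - tailSum T r f₁ x| := fun x => by
    rw [tailSum_sub, tailSum_add, tailSum_single, tailSum_single,
      rootPathIndicator_of_adj hT hadj hd]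
    rcases eq_or_ne x b with rfl | hx
    · simp [← hb]
      ring
    · simp [hx]
  rw [tailDist, sum_congr rfl fun x _ => htail x, sum_add_distrib, sum_ite_eq']
  simp [tailDist]

lemma exists_coupling_of_deepest_excess [DecidableEq V] (hT : T.IsTree) (hf₀ : 0 ≤ f₀)
    (hf₁ : 0 ≤ f₁) {x₀ : V} (hx₀ : x₀ ≠ r) (hlt : f₁ x₀ < f₀ x₀)
    (hmax : ∀ y, f₀ y ≠ f₁ y → T.dist r y ≤ T.dist r x₀)
    (ih : ∀ g, 0 ≤ g → ∑ x, g x = ∑ x, f₀ x →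
      disagreementWeight T r g f₁ < disagreementWeight T r f₀ f₁ →
      ∃ π, IsCoupling g f₁ π ∧ couplingCost T π ≤ tailDist T r g f₁) :
    ∃ π, IsCoupling f₀ f₁ π ∧ couplingCost T π ≤ tailDist T r f₀ f₁ := by
  obtain ⟨p, hadj, hd⟩ := exists_adj_dist_eq_add_one hT.connected hx₀
  have hpx : p ≠ x₀ := hadj.ne
  set m := f₀ x₀ - f₁ x₀ with hm
  set g := f₀ + Pi.single p m - Pi.single x₀ m
  have hg_nonneg : 0 ≤ g := fun x => by
    rcases eq_or_ne x x₀ with rfl | hx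
    · simpa [g, hpx.symm, m] using hf₁ x
    · have := hf₀ x
      simp only [g, Pi.add_apply, Pi.sub_apply, Pi.single_apply, if_neg hx]
      split_ifs <;> linarith
  have hg_sum : ∑ x, g x = ∑ x, f₀ x := by
    simp [g, sum_add_distrib, sum_sub_distrib]
  have hg_weight : disagreementWeight T r g f₁ < disagreementWeight T r f₀ f₁ :=
    disagreementWeight_lt (p := p) (by omega) hlt.ne' (by simp [g, hpx.symm, m])
      fun x hx hxp => by simp [g, hx, hxp]
  obtain ⟨π, hπ, hcost⟩ := ih g hg_nonneg hg_sum hg_weight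
  obtain ⟨σ, hσ, hσcost⟩ := hπ.exists_transfer hT.connected x₀ p (by linarith : 0 ≤ m)
    (by simpa [g, hpx] using hf₀ p)
  have hgf : g + Pi.single x₀ m - Pi.single p m = f₀ := by
    ext x
    simp only [g, Pi.add_apply, Pi.sub_apply]
    ring
  refine ⟨σ, hgf ▸ hσ, ?_⟩
  rw [dist_eq_one_iff_adj.2 hadj.symm, Nat.cast_one, mul_one] at hσcost
  rw [tailDist_eq_add_tailDist_transfer hT hadj hd hmax, ← hm, abs_of_pos (by linarith)]
  linarith

end TailDist

section Wasserstein

variable {V : Type*} [Fintype V] {T : SimpleGraph V} {f₀ f₁ : V → ℝ}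

theorem exists_isCoupling_couplingCost_le_tailDist (hT : T.IsTree) (r : V) (hf₀ : 0 ≤ f₀)
    (hf₁ : 0 ≤ f₁) (hsum : ∑ x, f₀ x = ∑ x, f₁ x) :
    ∃ π, IsCoupling f₀ f₁ π ∧ couplingCost T π ≤ tailDist T r f₀ f₁ := by
  classical
  induction hn : disagreementWeight T r f₀ f₁ using Nat.strong_induction_on
    generalizing f₀ f₁ with
  | _ n ih =>
    by_cases hall : f₀ = f₁
    · subst hall
      exact ⟨_, isCoupling_diagonal hf₀, (couplingCost_diagonal f₀).trans_le tailDist_nonneg⟩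
    obtain ⟨x₀, hx₀, hmax⟩ := exists_deepest_disagreement (T := T) (r := r) hall
    have hx₀r := ne_root_of_deepest_disagreement hT.connected hsum hx₀ hmax
    wlog hlt : f₁ x₀ < f₀ x₀ generalizing f₀ f₁
    · obtain ⟨π, hπ, hcost⟩ := this hf₁ hf₀ hsum.symm (disagreementWeight_comm.trans hn)
        (Ne.symm hall) hx₀.symm (fun y hy => hmax y (Ne.symm hy))
        (lt_of_le_of_ne (not_lt.1 hlt) hx₀)
      exact ⟨_, hπ.transpose, by rwa [couplingCost_transpose, tailDist_comm]⟩
    exact exists_coupling_of_deepest_excess hT hf₀ hf₁ hx₀r hlt hmax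
      fun g hg hgs hlt' => ih _ (hn ▸ hlt') hg hf₁ (hgs.trans hsum) rfl

theorem W1_eq_tailDist (hT : T.IsTree) (r : V) (hf₀ : 0 ≤ f₀) (hf₁ : 0 ≤ f₁)
    (hsum : ∑ x, f₀ x = ∑ x, f₁ x) : W1 T f₀ f₁ = tailDist T r f₀ f₁ := by
  obtain ⟨π, hπ, hcost⟩ := exists_isCoupling_couplingCost_le_tailDist hT r hf₀ hf₁ hsum
  refine IsLeast.csInf_eq ⟨⟨π, hπ, (hcost.antisymm (tailDist_le_couplingCost hT hπ)).symm⟩, ?_⟩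
  rintro c ⟨σ, hσ, rfl⟩
  exact tailDist_le_couplingCost hT hσ

end Wasserstein

theorem statement2_general {V E : Type*} [Fintype V]
    (G : DiGraph V E) (r : V) (hG : G.IsRootedTree r)
    (f f' : ℝ → V → ℝ)
    (hf_prob : ∀ t ∈ Icc (0:ℝ) 1, IsProbDist (f t))
    (hderiv : ∀ x : V, ∀ t ∈ Icc (0:ℝ) 1,
      HasDerivWithinAt (fun s => f s x) (f' t x) (Icc (0:ℝ) 1) t)
    (t : ℝ) (ht : t ∈ Ioo (0:ℝ) 1) :
    Filter.Tendsto (fun h : ℝ => W1 G.toSimpleGraph (f (t + h)) (f t) / |h|)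
      (nhdsWithin (0:ℝ) {(0:ℝ)}ᶜ)
      (nhds (∑ x, |tailSum G.toSimpleGraph r (f' t) x|)) := by
  have hIcc : Icc (0:ℝ) 1 ∈ 𝓝 t := Icc_mem_nhds ht.1 ht.2
  have hslope : ∀ x, Tendsto
      (fun h : ℝ => h⁻¹ •
        (tailSum G.toSimpleGraph r (f (t + h)) x - tailSum G.toSimpleGraph r (f t) x))
      (𝓝[≠] 0) (𝓝 (tailSum G.toSimpleGraph r (f' t) x)) := fun x =>
    (hasDerivAt_tailSum (fun y => (hderiv y t (mem_of_mem_nhds hIcc)).hasDerivAt hIcc)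
      x).tendsto_slope_zero
  have hnear : ∀ᶠ h in 𝓝[≠] (0:ℝ), t + h ∈ Icc (0:ℝ) 1 :=
    nhdsWithin_le_nhds <| (continuous_const_add t).tendsto' 0 t (add_zero t) |>.eventually hIcc
  refine (tendsto_finsetSum _ fun x _ => (hslope x).abs).congr' ?_
  filter_upwards [hnear] with h hh
  have hp₀ := hf_prob _ hh
  have hp₁ := hf_prob _ (mem_of_mem_nhds hIcc)
  rw [W1_eq_tailDist hG.1 r hp₀.1 hp₁.1 (hp₀.2.trans hp₁.2.symm), tailDist, sum_div]
  simp only [smul_eq_mul, abs_mul, abs_inv, div_eq_inv_mul]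

/-- metric speed of a C¹ path of distributions on a rooted tree. -/
theorem statement2 {V E : Type*} [Fintype V] [Fintype E] [DecidableEq V]
    (G : DiGraph V E) (r : V) (hG : G.IsRootedTree r)
    (f f' : ℝ → V → ℝ)
    (hf_prob : ∀ t ∈ Icc (0:ℝ) 1, IsProbDist (f t))
    (hderiv : ∀ x : V, ∀ t ∈ Icc (0:ℝ) 1,
      HasDerivWithinAt (fun s => f s x) (f' t x) (Icc (0:ℝ) 1) t)
    (hf'cont : ContinuousOn (fun t => f' t) (Icc (0:ℝ) 1))
    (t : ℝ) (ht : t ∈ Ioo (0:ℝ) 1) :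
    Filter.Tendsto (fun h : ℝ => W1 G.toSimpleGraph (f (t + h)) (f t) / |h|)
      (nhdsWithin (0:ℝ) {(0:ℝ)}ᶜ)
      (nhds (∑ x, |tailSum G.toSimpleGraph r (f' t) x|)) :=
  statement2_general G r hG f f' hf_prob hderiv t ht
end

section
/- Let E be a finite set, let q ≥ 1, and fix a vector w : E → ℝ with s := Σ_{k∈E} |w_k| > 0. Among all pairs (v, g) with v : [0,1] → (E → ℝ) continuous and g : [0,1] → (E → ℝ) a continuous path of probability distributions on E satisfying ∫_0^1 v(t)_k g(t)_k dt = w_k for every k ∈ E, the constant pair v(t)_k = sign(w_k) · s, g(t)_k = |w_k| / s minimizes I_q, and its value is I_q(v, g) = s; that is, every admissible pair (v', g') satisfies I_q(v', g') ≥ Σ_{k∈E} |w_k|. -/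
/-!
The constant pair transports `w k` along edge `k` at speed `s = ∑ |w k|` with mass
`|w k| / s`, so every integrand of `I_q` equals `s ^ q`. For the lower bound, the triangle
inequality gives `s ≤ ∫₀¹ ∑ₖ |v' g'|`; at each time, the power-mean inequality for the
probability weights `g' t` bounds the integrand by `(∑ₖ g' |v'| ^ q) ^ (1/q)`, and Jensen's
inequality for the concave map `x ↦ x ^ (1/q)` moves the root outside the integral.
-/

open scoped BigOperators
open Set

open MeasureTheory

namespace Real

theorem sign_mul_abs (x : ℝ) : sign x * |x| = x := by
  rcases lt_trichotomy x 0 with hx | rfl | hx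
  · rw [sign_of_neg hx, abs_of_neg hx, neg_one_mul, neg_neg]
  · rw [abs_zero, mul_zero]
  · rw [sign_of_pos hx, abs_of_pos hx, one_mul]

end Real

theorem isProbDist_abs_div_sum {E : Type*} [Fintype E] (w : E → ℝ) (hw : 0 < ∑ k, |w k|) :
    IsProbDist fun k => |w k| / ∑ j, |w j| :=
  ⟨fun k => by positivity, by rw [← Finset.sum_div, div_self hw.ne']⟩

theorem Iq_const {E : Type*} [Fintype E] (q : ℝ) (v g : E → ℝ) :
    Iq q (fun _ => v) (fun _ => g) = (∑ k, g k * |v k| ^ q) ^ (1 / q) := by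
  simp [Iq]

theorem IsProbDist.sum_abs_mul_le_rpow {E : Type*} [Fintype E] {p : E → ℝ} (hp : IsProbDist p)
    (x : E → ℝ) {q : ℝ} (hq : 1 ≤ q) :
    ∑ k, |x k * p k| ≤ (∑ k, p k * |x k| ^ q) ^ (1 / q) := by
  have hxp : ∀ k, |x k * p k| = p k * |x k| := fun k => by
    rw [abs_mul, abs_of_nonneg (hp.1 k), mul_comm]
  simp only [hxp]
  exact Real.arith_mean_le_rpow_mean _ _ _ (fun k _ => hp.1 k) hp.2 (fun k _ => abs_nonneg _) hq

theorem integral_rpow_le_rpow_integral {α : Type*} [MeasurableSpace α] {μ : Measure α}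
    [IsProbabilityMeasure μ] {f : α → ℝ} (hf₀ : 0 ≤ᵐ[μ] f) (hf : Integrable f μ) {p : ℝ}
    (hp₀ : 0 ≤ p) (hp₁ : p ≤ 1) (hfp : Integrable (fun x => f x ^ p) μ) :
    ∫ x, f x ^ p ∂μ ≤ (∫ x, f x ∂μ) ^ p :=
  (Real.concaveOn_rpow hp₀ hp₁).le_map_integral (Real.continuous_rpow_const hp₀).continuousOn
    isClosed_Ici hf₀ hf hfp

instance : IsProbabilityMeasure (volume.restrict (Ioc (0 : ℝ) 1)) :=
  ⟨by simp⟩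

theorem sum_abs_integral_le_Iq {E : Type*} [Fintype E] {q : ℝ} (hq : 1 ≤ q)
    {v g : ℝ → E → ℝ} (hv : ContinuousOn v (Icc 0 1)) (hg : ContinuousOn g (Icc 0 1))
    (hprob : ∀ t ∈ Icc (0 : ℝ) 1, IsProbDist (g t)) :
    ∑ k, |∫ t in (0 : ℝ)..1, v t k * g t k| ≤ Iq q v g := by
  set μ := volume.restrict (Ioc (0 : ℝ) 1)
  have integrable {f : ℝ → ℝ} (hf : ContinuousOn f (Icc 0 1)) : Integrable f μ :=
    hf.integrableOn_Icc.mono_set Ioc_subset_Icc_self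
  have on_Ioc {P : ℝ → Prop} (hP : ∀ t ∈ Icc (0 : ℝ) 1, P t) : ∀ᵐ t ∂μ, P t :=
    (ae_restrict_mem measurableSet_Ioc).mono fun t ht => hP t (Ioc_subset_Icc_self ht)
  have hvk k : ContinuousOn (v · k) (Icc 0 1) := (continuous_apply k).comp_continuousOn hv
  have hgk k : ContinuousOn (g · k) (Icc 0 1) := (continuous_apply k).comp_continuousOn hg
  have hvg k : ContinuousOn (fun t => |v t k * g t k|) (Icc 0 1) := ((hvk k).mul (hgk k)).abs
  set H : ℝ → ℝ := fun t => ∑ k, g t k * |v t k| ^ q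
  have hq₀ : 0 < q := one_pos.trans_le hq
  have hH₀ : ∀ t ∈ Icc (0 : ℝ) 1, 0 ≤ H t := fun t ht =>
    Finset.sum_nonneg fun k _ => mul_nonneg ((hprob t ht).1 k) (by positivity)
  have hH : ContinuousOn H (Icc 0 1) :=
    continuousOn_finsetSum _ fun k _ =>
      (hgk k).mul ((hvk k).abs.rpow_const fun _ _ => Or.inr hq₀.le)
  have hHq : ContinuousOn (fun t => H t ^ (1 / q)) (Icc 0 1) :=
    hH.rpow_const fun _ _ => Or.inr (by positivity)
  simp only [intervalIntegral.integral_of_le zero_le_one, Iq]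
  calc ∑ k, |∫ t, v t k * g t k ∂μ|
      ≤ ∑ k, ∫ t, |v t k * g t k| ∂μ :=
        Finset.sum_le_sum fun k _ => abs_integral_le_integral_abs
    _ = ∫ t, ∑ k, |v t k * g t k| ∂μ :=
        (integral_finsetSum _ fun k _ => integrable (hvg k)).symm
    _ ≤ ∫ t, H t ^ (1 / q) ∂μ :=
        integral_mono_ae (integrable (continuousOn_finsetSum _ fun k _ => hvg k))
          (integrable hHq) (on_Ioc fun t ht => (hprob t ht).sum_abs_mul_le_rpow (v t) hq)
    _ ≤ (∫ t, H t ∂μ) ^ (1 / q) :=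
        integral_rpow_le_rpow_integral (on_Ioc hH₀) (integrable hH) (by positivity)
          (div_le_one_of_le₀ hq hq₀.le) (integrable hHq)

/-- the constant pair minimizes `I_q` among pairs with a fixed
time-integrated flow `w`, and its value is `Σ_k |w_k|`. -/
theorem statement8 {E : Type*} [Fintype E] (q : ℝ) (hq : 1 ≤ q)
    (w : E → ℝ) (hw : 0 < ∑ k, |w k|)
    (v g : ℝ → E → ℝ)
    (hv : ∀ t k, v t k = Real.sign (w k) * ∑ j, |w j|)
    (hg : ∀ t k, g t k = |w k| / ∑ j, |w j|) :
    (∀ t : ℝ, IsProbDist (g t)) ∧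
    (∀ k, (∫ t in (0:ℝ)..1, v t k * g t k) = w k) ∧
    Iq q v g = ∑ k, |w k| ∧
    (∀ v' g' : ℝ → E → ℝ,
      ContinuousOn (fun t => v' t) (Icc (0:ℝ) 1) →
      ContinuousOn (fun t => g' t) (Icc (0:ℝ) 1) →
      (∀ t ∈ Icc (0:ℝ) 1, IsProbDist (g' t)) →
      (∀ k, (∫ t in (0:ℝ)..1, v' t k * g' t k) = w k) →
      ∑ k, |w k| ≤ Iq q v' g') := by
  set s := ∑ k, |w k|
  obtain rfl : v = fun _ k => Real.sign (w k) * s := funext fun t => funext (hv t)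
  obtain rfl : g = fun _ k => |w k| / s := funext fun t => funext (hg t)
  have hflow k : Real.sign (w k) * s * (|w k| / s) = w k := by
    rw [mul_assoc, mul_div_cancel₀ _ hw.ne', Real.sign_mul_abs]
  have henergy : ∑ k, |w k| / s * |Real.sign (w k) * s| ^ q = s ^ q := by
    have hk k : |w k| / s * |Real.sign (w k) * s| ^ q = |w k| / s * s ^ q := by
      by_cases hwk : w k = 0
      · simp [hwk]
      · rcases Real.sign_apply_eq_of_ne_zero _ hwk with h | h <;> simp [h, abs_of_pos hw]
    rw [Finset.sum_congr rfl fun k _ => hk k, ← Finset.sum_mul,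
      (isProbDist_abs_div_sum w hw).2, one_mul]
  refine ⟨fun _ => isProbDist_abs_div_sum w hw, fun k => by simp [hflow], ?_, ?_⟩
  · rw [Iq_const, henergy, one_div, Real.rpow_rpow_inv hw.le (one_pos.trans_le hq).ne']
  · intro v' g' hv' hg' hprob hint
    simpa only [hint] using sum_abs_integral_le_Iq hq hv' hg' hprob
end

section
/- Let G be a finite directed graph, q ≥ 1, and f0, f1 probability distributions on V. For any continuous v : [0,1] → (E → ℝ) and any continuous path g : [0,1] → (E → ℝ) of probability distributions on E satisfying Σ_{k∈E} ω_{x,k} ∫_0^1 v(t)_k g(t)_k dt = f1(x) − f0(x) for all x ∈ V, one has I_q(v, g) ≥ (1/2) Σ_{x∈V} |f1(x) − f0(x)|. Consequently V_q(f0, f1) ≥ TV(f0, f1), the total variation distance. -/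
open scoped BigOperators
open Set

/-!
Each edge meets exactly two vertices, so the constraint gives
`∑ₓ |f1 x - f0 x| ≤ 2 ∑ₖ |∫ vₖ gₖ| ≤ 2 ∫ ∑ₖ gₖ |vₖ|`. Since `g t` is a probability
distribution, the power-mean inequality bounds `∑ₖ gₖ |vₖ|` by `(∑ₖ gₖ |vₖ|^q)^(1/q)`, and
Jensen's inequality for the concave map `x ↦ x^(1/q)` moves the exponent outside the integral.
-/

open MeasureTheory

theorem IsProbDist.sum_mul_le_rpow {S : Type*} [Fintype S] {w a : S → ℝ} (hw : IsProbDist w)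
    (ha : ∀ s, 0 ≤ a s) {q : ℝ} (hq : 1 ≤ q) :
    ∑ s, w s * a s ≤ (∑ s, w s * a s ^ q) ^ (1 / q) := by
  simpa [hw.2, one_div] using Real.inner_le_weight_mul_Lp_of_nonneg Finset.univ hq w a hw.1 ha

theorem intervalIntegral_rpow_le_rpow_integral {B : ℝ → ℝ} (hB : ContinuousOn B (Icc 0 1))
    (hB0 : ∀ t ∈ Icc (0:ℝ) 1, 0 ≤ B t) {p : ℝ} (hp0 : 0 ≤ p) (hp1 : p ≤ 1) :
    ∫ t in (0:ℝ)..1, B t ^ p ≤ (∫ t in (0:ℝ)..1, B t) ^ p := by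
  have : IsProbabilityMeasure (volume.restrict (Ioc (0:ℝ) 1)) :=
    ⟨by simp [Real.volume_Ioc]⟩
  rw [intervalIntegral.integral_of_le zero_le_one, intervalIntegral.integral_of_le zero_le_one]
  refine (Real.concaveOn_rpow hp0 hp1).le_map_integral
    (continuous_id.rpow_const fun _ => Or.inr hp0).continuousOn isClosed_Ici ?_
    (hB.integrableOn_Icc.mono_set Ioc_subset_Icc_self) ?_
  · exact (ae_restrict_mem measurableSet_Ioc).mono fun t ht => hB0 t (Ioc_subset_Icc_self ht)
  · exact ((hB.rpow_const fun _ _ => Or.inr hp0).integrableOn_Icc).mono_set Ioc_subset_Icc_self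

theorem sum_abs_integral_mul_le_Iq {E : Type*} [Fintype E] {q : ℝ} (hq : 1 ≤ q)
    {v g : ℝ → E → ℝ} (hv : ContinuousOn v (Icc 0 1)) (hg : ContinuousOn g (Icc 0 1))
    (hg_prob : ∀ t ∈ Icc (0:ℝ) 1, IsProbDist (g t)) :
    ∑ k, |∫ t in (0:ℝ)..1, v t k * g t k| ≤ Iq q v g := by
  have hq0 : 0 < q := zero_lt_one.trans_le hq
  have hI : uIcc (0:ℝ) 1 = Icc 0 1 := uIcc_of_le zero_le_one
  have hvk k : ContinuousOn (fun t => v t k) (Icc 0 1) := (continuous_apply k).comp_continuousOn hv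
  have hgk k : ContinuousOn (fun t => g t k) (Icc 0 1) := (continuous_apply k).comp_continuousOn hg
  have hA : ContinuousOn (fun t => ∑ k, g t k * |v t k|) (Icc 0 1) :=
    continuousOn_finsetSum _ fun k _ => (hgk k).mul (hvk k).abs
  have hB : ContinuousOn (fun t => ∑ k, g t k * |v t k| ^ q) (Icc 0 1) :=
    continuousOn_finsetSum _ fun k _ =>
      (hgk k).mul ((hvk k).abs.rpow_const fun _ _ => Or.inr hq0.le)
  have hBp : ContinuousOn (fun t => (∑ k, g t k * |v t k| ^ q) ^ (1 / q)) (Icc 0 1) :=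
    hB.rpow_const fun _ _ => Or.inr (by positivity)
  calc ∑ k, |∫ t in (0:ℝ)..1, v t k * g t k|
      ≤ ∑ k, ∫ t in (0:ℝ)..1, g t k * |v t k| := by
        gcongr with k
        refine (intervalIntegral.abs_integral_le_integral_abs zero_le_one).trans_eq
          (intervalIntegral.integral_congr fun t ht => ?_)
        rw [hI] at ht
        simp only [abs_mul, abs_of_nonneg ((hg_prob t ht).1 k), mul_comm]
    _ = ∫ t in (0:ℝ)..1, ∑ k, g t k * |v t k| :=
        (intervalIntegral.integral_finsetSum fun k _ =>
          ((hgk k).mul (hvk k).abs).intervalIntegrable_of_Icc zero_le_one).symm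
    _ ≤ ∫ t in (0:ℝ)..1, (∑ k, g t k * |v t k| ^ q) ^ (1 / q) :=
        intervalIntegral.integral_mono_on zero_le_one
          (hA.intervalIntegrable_of_Icc zero_le_one) (hBp.intervalIntegrable_of_Icc zero_le_one)
          fun t ht => (hg_prob t ht).sum_mul_le_rpow (fun k => abs_nonneg _) hq
    _ ≤ Iq q v g :=
        intervalIntegral_rpow_le_rpow_integral hB
          (fun t ht => Finset.sum_nonneg fun k _ =>
            mul_nonneg ((hg_prob t ht).1 k) (by positivity))
          (by positivity) ((div_le_one hq0).2 hq)

namespace DiGraph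

variable {V E : Type*} [Fintype V] [DecidableEq V] (G : DiGraph V E)

theorem sum_abs_incidence (k : E) : ∑ x, |G.incidence x k| = 2 := by
  have htail : G.tail k ≠ G.head k := G.ne k
  rw [← Finset.add_sum_erase _ _ (Finset.mem_univ (G.head k)),
    ← Finset.add_sum_erase _ _ (Finset.mem_erase.2 ⟨htail, Finset.mem_univ _⟩),
    Finset.sum_eq_zero]
  · simp [incidence, htail.symm]
    norm_num
  · intro x hx
    obtain ⟨hxt, hxh, -⟩ := by simpa only [Finset.mem_erase] using hx
    simp [incidence, Ne.symm hxt, Ne.symm hxh]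

theorem sum_abs_incidence_mul_le [Fintype E] (c : E → ℝ) :
    ∑ x, |∑ k, G.incidence x k * c k| ≤ 2 * ∑ k, |c k| :=
  calc ∑ x, |∑ k, G.incidence x k * c k|
      ≤ ∑ x, ∑ k, |G.incidence x k| * |c k| := by
        gcongr with x
        exact (Finset.abs_sum_le_sum_abs _ _).trans_eq (by simp only [abs_mul])
    _ = ∑ k, (∑ x, |G.incidence x k|) * |c k| := by
        rw [Finset.sum_comm]
        simp only [Finset.sum_mul]
    _ = 2 * ∑ k, |c k| := by simp only [sum_abs_incidence, Finset.mul_sum]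

theorem half_sum_abs_sub_le_Iq [Fintype E] {q : ℝ} (hq : 1 ≤ q) {f0 f1 : V → ℝ}
    {v g : ℝ → E → ℝ} (hv : ContinuousOn v (Icc 0 1)) (hg : ContinuousOn g (Icc 0 1))
    (hg_prob : ∀ t ∈ Icc (0:ℝ) 1, IsProbDist (g t))
    (hflux : ∀ x, ∑ k, G.incidence x k * (∫ t in (0:ℝ)..1, v t k * g t k) = f1 x - f0 x) :
    (1 / 2) * ∑ x, |f1 x - f0 x| ≤ Iq q v g := by
  have hTV := G.sum_abs_incidence_mul_le fun k => ∫ t in (0:ℝ)..1, v t k * g t k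
  simp only [hflux] at hTV
  linarith [sum_abs_integral_mul_le_Iq hq hv hg hg_prob]

end DiGraph

theorem statement14_general {V E : Type*} [Fintype V] [Fintype E] [DecidableEq V]
    (G : DiGraph V E) (q : ℝ) (hq : 1 ≤ q)
    (f0 f1 : V → ℝ) :
    (∀ v g : ℝ → E → ℝ,
      ContinuousOn (fun t => v t) (Icc (0:ℝ) 1) →
      ContinuousOn (fun t => g t) (Icc (0:ℝ) 1) →
      (∀ t ∈ Icc (0:ℝ) 1, IsProbDist (g t)) →
      (∀ x : V, ∑ k, G.incidence x k * (∫ t in (0:ℝ)..1, v t k * g t k)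
        = f1 x - f0 x) →
      (1 / 2) * ∑ x, |f1 x - f0 x| ≤ Iq q v g) ∧
    (1 / 2) * ∑ x, |f1 x - f0 x| ∈
      lowerBounds {c : ℝ | ∃ v g : ℝ → E → ℝ,
        ContinuousOn (fun t => v t) (Icc (0:ℝ) 1) ∧
        ContinuousOn (fun t => g t) (Icc (0:ℝ) 1) ∧
        (∀ t ∈ Icc (0:ℝ) 1, IsProbDist (g t)) ∧
        (∀ x : V, ∑ k, G.incidence x k * (∫ t in (0:ℝ)..1, v t k * g t k)
          = f1 x - f0 x) ∧
        c = Iq q v g} := by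
  refine ⟨fun v g hv hg hg_prob hflux => G.half_sum_abs_sub_le_Iq hq hv hg hg_prob hflux, ?_⟩
  rintro _ ⟨v, g, hv, hg, hg_prob, hflux, rfl⟩
  exact G.half_sum_abs_sub_le_Iq hq hv hg hg_prob hflux

/-- `I_q ≥ TV` for any admissible pair, hence `V_q ≥ TV`. -/
theorem statement14 {V E : Type*} [Fintype V] [Fintype E] [DecidableEq V]
    (G : DiGraph V E) (q : ℝ) (hq : 1 ≤ q)
    (f0 f1 : V → ℝ) (h0 : IsProbDist f0) (h1 : IsProbDist f1) :
    (∀ v g : ℝ → E → ℝ,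
      ContinuousOn (fun t => v t) (Icc (0:ℝ) 1) →
      ContinuousOn (fun t => g t) (Icc (0:ℝ) 1) →
      (∀ t ∈ Icc (0:ℝ) 1, IsProbDist (g t)) →
      (∀ x : V, ∑ k, G.incidence x k * (∫ t in (0:ℝ)..1, v t k * g t k)
        = f1 x - f0 x) →
      (1 / 2) * ∑ x, |f1 x - f0 x| ≤ Iq q v g) ∧
    (1 / 2) * ∑ x, |f1 x - f0 x| ∈
      lowerBounds {c : ℝ | ∃ v g : ℝ → E → ℝ,
        ContinuousOn (fun t => v t) (Icc (0:ℝ) 1) ∧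
        ContinuousOn (fun t => g t) (Icc (0:ℝ) 1) ∧
        (∀ t ∈ Icc (0:ℝ) 1, IsProbDist (g t)) ∧
        (∀ x : V, ∑ k, G.incidence x k * (∫ t in (0:ℝ)..1, v t k * g t k)
          = f1 x - f0 x) ∧
        c = Iq q v g} :=
  statement14_general G q hq f0 f1
end
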